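/- Let R be a commutative ring in which 2 is invertible. Then the chromatic number of the regular graph on SL₂(R) (x ~ y iff det(x+y) = 0) is at least the chromatic number of the hyperbola graph Cay(R², {(x,y) : xy = 1}). -/

import Mathlib

/-- The regular graph on `SL_n(R)`: distinct `x, y` are adjacent iff `det(x+y) = 0`. -/
def regGraph (n : ℕ) (R : Type) [CommRing R] :
    SimpleGraph (Matrix.SpecialLinearGroup (Fin n) R) where
  Adj x y := x ≠ y ∧ ((x : Matrix (Fin n) (Fin n) R) + y).det = 0
  symm := ⟨by
    rintro x y ⟨h1, h2⟩
    exact ⟨h1.symm, by rwa [add_comm]⟩⟩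
  loopless := ⟨fun x h => h.1 rfl⟩

/-- The hyperbola graph `H(R) = Cay(R², {(x,y) : xy = 1})`. -/
def hgraph (R : Type) [CommRing R] : SimpleGraph (R × R) :=
  SimpleGraph.fromRel (fun v w => (w.1 - v.1) * (w.2 - v.2) = 1)

/-!
The map `(a, b) ↦ !![2a, 4ab - 1; 1, 2b]` lands in `SL₂(R)` and satisfies
`det (φ v + φ w) = 4 (1 - (w₁ - v₁)(w₂ - v₂))`, so it sends edges of the hyperbola graph to
edges of the regular graph; when `2` is a unit it is injective, hence a graph homomorphism.
-/

section

variable {R : Type} [CommRing R]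

def hyperbolaToSL (v : R × R) : Matrix.SpecialLinearGroup (Fin 2) R :=
  ⟨!![2 * v.1, 4 * (v.1 * v.2) - 1; 1, 2 * v.2], by
    rw [Matrix.det_fin_two_of]; ring⟩

theorem det_hyperbolaToSL_add (v w : R × R) :
    ((hyperbolaToSL v : Matrix (Fin 2) (Fin 2) R) + hyperbolaToSL w).det =
      4 * (1 - (w.1 - v.1) * (w.2 - v.2)) := by
  simp [hyperbolaToSL, Matrix.det_fin_two]
  ring

theorem hyperbolaToSL_injective (h2 : IsUnit (2 : R)) :
    Function.Injective (hyperbolaToSL (R := R)) := by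
  intro v w h
  have hmat := (Matrix.SpecialLinearGroup.ext_iff _ _).mp h
  have h00 : 2 * v.1 = 2 * w.1 := by simpa [hyperbolaToSL] using hmat 0 0
  have h11 : 2 * v.2 = 2 * w.2 := by simpa [hyperbolaToSL] using hmat 1 1
  exact Prod.ext (h2.mul_right_injective h00) (h2.mul_right_injective h11)

def hyperbolaHom (h2 : IsUnit (2 : R)) : hgraph R →g regGraph 2 R where
  toFun := hyperbolaToSL
  map_rel' {v w} h := by
    obtain ⟨hne, hrel⟩ := (SimpleGraph.fromRel_adj _ v w).mp h
    have hprod : (w.1 - v.1) * (w.2 - v.2) = 1 := by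
      rcases hrel with h | h
      · exact h
      · linear_combination h
    refine ⟨(hyperbolaToSL_injective h2).ne hne, ?_⟩
    rw [det_hyperbolaToSL_add, hprod, sub_self, mul_zero]

end

/-- If `2` is invertible in the commutative ring `R`, then the chromatic number of
the regular graph on `SL₂(R)` is at least that of the hyperbola graph `H(R)`. -/
theorem chromatic_regular_ge_hyperbola {R : Type} [CommRing R]
    (h2 : IsUnit (2 : R)) :
    (hgraph R).chromaticNumber ≤ (regGraph 2 R).chromaticNumber :=
  SimpleGraph.chromaticNumber_mono_of_hom (hyperbolaHom h2)
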